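/- arXiv:2209.06371 — 4 statements merged into one kernel-verified Lean document; each statement's English description precedes it below -/
import Mathlib

section
/- Let ζ₁ < ζ₀ be real numbers, let a be a real number with a ≥ ζ₀, and let z be a complex number with z ∉ [ζ₁, ∞). Then |a − ζ₁| / |a − z| ≤ |z − ζ₁| / dist(z, [ζ₁, ∞)), where dist denotes the distance from z to the half-line [ζ₁,∞) ⊂ ℂ. -/
/-!
Write `S = [c, ∞) ⊆ ℂ` for the half-line starting at `c = ζ₁`. If `Re z ≥ c`, the foot of the
perpendicular from `z` to the real axis lies on `S`, so `dist(z, S) ≤ |Im z|`; and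
`|a − c| · |Im z|` is twice the area of the triangle `c, a, z`, hence at most `|z − c| · |a − z|`
(the law of sines). If `Re z < c`, then `dist(z, S) ≤ |z − c|` and `|a − c| ≤ |a − z|`.
In both cases `|a − c| · dist(z, S) ≤ |z − c| · |a − z|`.
-/

open Complex Metric Set

theorem abs_sub_mul_abs_im_le_norm_sub_mul_norm_sub (s t : ℝ) (z : ℂ) :
    |t - s| * |z.im| ≤ ‖z - s‖ * ‖z - t‖ := by
  have him : ((z - s) * (starRingEnd ℂ) (z - t)).im = z.im * (s - t) := by
    simp only [mul_im, sub_re, sub_im, ofReal_re, ofReal_im, conj_re, conj_im]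
    ring
  calc |t - s| * |z.im| = |((z - s) * (starRingEnd ℂ) (z - t)).im| := by
        rw [him, abs_mul, abs_sub_comm, mul_comm]
    _ ≤ ‖(z - s) * (starRingEnd ℂ) (z - t)‖ := abs_im_le_norm _
    _ = ‖z - s‖ * ‖z - t‖ := by rw [norm_mul, norm_conj]

theorem infDist_ofReal_Ici_le_abs_im {c : ℝ} {z : ℂ} (hre : c ≤ z.re) :
    infDist z (ofReal '' Ici c) ≤ |z.im| := by
  have hdist : dist z (z.re : ℂ) = |z.im| := by
    rw [dist_eq, ← abs_im_eq_norm.mpr (by simp)]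
    simp
  exact hdist ▸ infDist_le_dist_of_mem ⟨z.re, hre, rfl⟩

theorem infDist_ofReal_Ici_le_norm_sub (c : ℝ) (z : ℂ) :
    infDist z (ofReal '' Ici c) ≤ ‖z - c‖ :=
  dist_eq z c ▸ infDist_le_dist_of_mem ⟨c, self_mem_Ici, rfl⟩

theorem infDist_ofReal_Ici_pos {c : ℝ} {z : ℂ} (hz : z ∉ ofReal '' Ici c) :
    0 < infDist z (ofReal '' Ici c) :=
  ((isometry_ofReal.isClosedEmbedding.isClosedMap _ isClosed_Ici).notMem_iff_infDist_pos
    ⟨c, c, self_mem_Ici, rfl⟩).mp hz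

theorem norm_ofReal_sub_le_of_re_lt {a c : ℝ} {z : ℂ} (hre : z.re < c) (hca : c ≤ a) :
    ‖(a : ℂ) - c‖ ≤ ‖(a : ℂ) - z‖ := by
  calc ‖(a : ℂ) - c‖ = |a - c| := by rw [← ofReal_sub, norm_real, Real.norm_eq_abs]
    _ ≤ |((a : ℂ) - z).re| := by
        rw [sub_re, ofReal_re, abs_of_nonneg (sub_nonneg.mpr hca)]
        exact (sub_le_sub_left hre.le a).trans (le_abs_self _)
    _ ≤ ‖(a : ℂ) - z‖ := abs_re_le_norm _

theorem norm_sub_mul_infDist_ofReal_Ici_le {a c : ℝ} (hca : c ≤ a) (z : ℂ) :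
    ‖(a : ℂ) - c‖ * infDist z (ofReal '' Ici c) ≤ ‖z - c‖ * ‖(a : ℂ) - z‖ := by
  rcases le_or_gt c z.re with hre | hre
  · calc ‖(a : ℂ) - c‖ * infDist z (ofReal '' Ici c) ≤ |a - c| * |z.im| := by
          rw [← ofReal_sub, norm_real, Real.norm_eq_abs]
          gcongr
          exact infDist_ofReal_Ici_le_abs_im hre
      _ ≤ ‖z - c‖ * ‖(a : ℂ) - z‖ := by
          rw [norm_sub_rev (a : ℂ)]
          exact abs_sub_mul_abs_im_le_norm_sub_mul_norm_sub c a z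
  · rw [mul_comm]
    exact mul_le_mul (infDist_ofReal_Ici_le_norm_sub c z) (norm_ofReal_sub_le_of_re_lt hre hca)
      (norm_nonneg _) (norm_nonneg _)

/-- Let `ζ₁ < ζ₀` be real numbers, `a ≥ ζ₀` real, and `z ∈ ℂ` not on the half-line
`[ζ₁, ∞) ⊆ ℂ`.  Then `|a − ζ₁| / |a − z| ≤ |z − ζ₁| / dist(z, [ζ₁, ∞))`. -/
theorem stmt_0 (ζ₀ ζ₁ a : ℝ) (hζ : ζ₁ < ζ₀) (ha : ζ₀ ≤ a) (z : ℂ)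
    (hz : z ∉ (Complex.ofReal '' Set.Ici ζ₁)) :
    ‖(a : ℂ) - (ζ₁ : ℂ)‖ / ‖(a : ℂ) - z‖ ≤
      ‖z - (ζ₁ : ℂ)‖ / Metric.infDist z (Complex.ofReal '' Set.Ici ζ₁) := by
  have hζa : ζ₁ ≤ a := hζ.le.trans ha
  have haz : 0 < ‖(a : ℂ) - z‖ := by
    rw [norm_pos_iff, sub_ne_zero]
    rintro rfl
    exact hz ⟨a, hζa, rfl⟩
  rw [div_le_div_iff₀ haz (infDist_ofReal_Ici_pos hz)]
  exact norm_sub_mul_infDist_ofReal_Ici_le hζa z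
end

section
/- Let (X, μ) be a measure space, γ ∈ (0,1], and let a, b : X → ℝ be measurable functions such that: (i) sup_x |a(x) − b(x)| ≤ ε for some ε ∈ (0, κ/2); (ii) there is a constant C₀ with μ({x : |a(x) − s| ≤ δ}) ≤ C₀ δ for all s ∈ [−2κ, 0] and all δ ∈ (0, κ]; (iii) μ({x : a(x) ≤ 0}) < ∞ and μ({x : −2κ ≤ a(x) ≤ −κ}) < ∞; (iv) on the set {a ≤ −κ} one has a priori integrable bounds for (a)₋^γ and (b)₋^γ. Then | ∫_X (a(x))₋^γ dμ − ∫_X (b(x))₋^γ dμ | ≤ C ε, for a constant C depending only on γ, κ, C₀, μ({a ≤ −κ/2}), and the Lipschitz constant of t ↦ (t)₋^γ on (−∞,−κ/2]. -/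
open MeasureTheory Set
open scoped ENNReal

/-!
For `p, q ≥ 0`, `|p ^ γ - q ^ γ|` is the integral of `γ u ^ (γ - 1)` between `p` and `q`. Where
`a ≤ -κ`, both negative parts are at least `κ / 2`, so this density is bounded and the difference is
`O(ε)` pointwise. Where `-κ < a ≤ ε`, integrating in `x` first (Tonelli) turns the bound into one on
the level sets: the `x` whose interval contains the level `u ∈ (0, 2κ]` satisfy `|a x + u| ≤ ε`, a
set of measure at most `C₀ ε`, and the density integrates to `(2κ) ^ γ` over `(0, 2κ]`. Where
`a > ε`, both negative parts vanish.
-/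

theorem setLIntegral_Ioc_mul_rpow_sub_one {γ p q : ℝ} (hγ : 0 < γ) (hp : 0 ≤ p) (hpq : p ≤ q) :
    ∫⁻ u in Ioc p q, ENNReal.ofReal (γ * u ^ (γ - 1)) = ENNReal.ofReal (q ^ γ - p ^ γ) := by
  have hr : (-1 : ℝ) < γ - 1 := by linarith
  have hint : IntegrableOn (fun u : ℝ => γ * u ^ (γ - 1)) (Ioc p q) :=
    ((intervalIntegral.intervalIntegrable_rpow' hr).const_mul γ).1
  have hnonneg : 0 ≤ᵐ[volume.restrict (Ioc p q)] fun u : ℝ => γ * u ^ (γ - 1) :=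
    (ae_restrict_iff' measurableSet_Ioc).2 <| ae_of_all _ fun u hu =>
      mul_nonneg hγ.le (Real.rpow_nonneg (hp.trans hu.1.le) _)
  rw [← ofReal_integral_eq_lintegral_ofReal hint hnonneg, ← intervalIntegral.integral_of_le hpq,
    intervalIntegral.integral_const_mul, integral_rpow (Or.inl hr), sub_add_cancel]
  field_simp

theorem ofReal_abs_rpow_sub_rpow {γ p q : ℝ} (hγ : 0 < γ) (hp : 0 ≤ p) (hq : 0 ≤ q) :
    ENNReal.ofReal |p ^ γ - q ^ γ| =
      ∫⁻ u in Ioc (min p q) (max p q), ENNReal.ofReal (γ * u ^ (γ - 1)) := by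
  rw [setLIntegral_Ioc_mul_rpow_sub_one hγ (le_min hp hq) min_le_max]
  rcases le_total p q with h | h
  · rw [max_eq_right h, min_eq_left h, abs_sub_comm,
      abs_of_nonneg (sub_nonneg.2 (Real.rpow_le_rpow hp h hγ.le))]
  · rw [max_eq_left h, min_eq_right h, abs_of_nonneg (sub_nonneg.2 (Real.rpow_le_rpow hq h hγ.le))]

theorem setLIntegral_Ioc_mul_rpow_sub_one_le {γ c p q : ℝ} (hγ₀ : 0 ≤ γ) (hγ₁ : γ ≤ 1)
    (hc : 0 < c) (hcp : c ≤ p) :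
    ∫⁻ u in Ioc p q, ENNReal.ofReal (γ * u ^ (γ - 1)) ≤
      ENNReal.ofReal (γ * c ^ (γ - 1)) * ENNReal.ofReal (q - p) := by
  calc ∫⁻ u in Ioc p q, ENNReal.ofReal (γ * u ^ (γ - 1))
      ≤ ∫⁻ _ in Ioc p q, ENNReal.ofReal (γ * c ^ (γ - 1)) := by
        refine setLIntegral_mono measurable_const fun u hu => ENNReal.ofReal_le_ofReal ?_
        exact mul_le_mul_of_nonneg_left
          (Real.rpow_le_rpow_of_nonpos hc (hcp.trans hu.1.le) (by linarith)) hγ₀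
    _ = _ := by rw [setLIntegral_const, Real.volume_Ioc]

theorem abs_max_zero_neg_sub_le (α β : ℝ) : |max 0 (-α) - max 0 (-β)| ≤ |α - β| := by
  simpa only [max_comm (0 : ℝ), abs_sub_comm α, neg_sub_neg] using
    abs_max_sub_max_le_abs (-α) (-β) 0

theorem abs_add_le_of_mem_Ioc_min_max {α β ε u : ℝ} (hαβ : |α - β| ≤ ε)
    (hu : u ∈ Ioc (min (max 0 (-α)) (max 0 (-β))) (max (max 0 (-α)) (max 0 (-β)))) :
    |α + u| ≤ ε := by
  rw [abs_le] at hαβ ⊢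
  simp only [mem_Ioc, max_def, min_def] at hu
  split_ifs at hu <;> constructor <;> linarith

section

variable {X : Type*} [MeasurableSpace X] {μ : Measure X}

theorem lintegral_setLIntegral_Ioc_le [SFinite μ] {s t : X → ℝ} (hs : Measurable s)
    (ht : Measurable t) {g : ℝ → ℝ≥0∞} (hg : Measurable g) {I : Set ℝ} (hI : MeasurableSet I)
    {M : ℝ≥0∞} (hM : ∀ u, μ {x | u ∈ Ioc (s x) (t x)} ≤ I.indicator (fun _ => M) u) :
    ∫⁻ x, (∫⁻ u in Ioc (s x) (t x), g u) ∂μ ≤ M * ∫⁻ u in I, g u := by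
  set E : Set (X × ℝ) := {p | p.2 ∈ Ioc (s p.1) (t p.1)}
  have hE : MeasurableSet E :=
    (measurableSet_lt (hs.comp measurable_fst) measurable_snd).inter
      (measurableSet_le measurable_snd (ht.comp measurable_fst))
  have hsection : ∀ x u, (Ioc (s x) (t x)).indicator g u = E.indicator (fun p => g p.2) (x, u) :=
    fun x u => by simp only [indicator_apply, E, mem_ofPred_eq]
  calc ∫⁻ x, (∫⁻ u in Ioc (s x) (t x), g u) ∂μ
      = ∫⁻ x, (∫⁻ u, E.indicator (fun p => g p.2) (x, u)) ∂μ := by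
        simp only [← hsection, lintegral_indicator measurableSet_Ioc]
    _ = ∫⁻ u, ∫⁻ x, E.indicator (fun p => g p.2) (x, u) ∂μ :=
        lintegral_lintegral_swap ((hg.comp measurable_snd).indicator hE).aemeasurable
    _ = ∫⁻ u, g u * μ {x | u ∈ Ioc (s x) (t x)} :=
        lintegral_congr fun u => lintegral_indicator_const (measurable_prodMk_right hE) (g u)
    _ ≤ ∫⁻ u, I.indicator (fun u => g u * M) u := by
        refine lintegral_mono fun u => ?_
        by_cases hu : u ∈ I
        · simpa only [indicator_of_mem hu] using mul_le_mul_right (hM u) (g u)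
        · have hnull : μ {x | u ∈ Ioc (s x) (t x)} = 0 := by simpa [hu] using hM u
          rw [hnull, mul_zero]
          exact zero_le
    _ = M * ∫⁻ u in I, g u := by
        rw [lintegral_indicator hI, lintegral_mul_const _ hg, mul_comm]

theorem abs_integral_sub_integral_le_lintegral {f g : X → ℝ} (hf : AEStronglyMeasurable f μ)
    (hg : AEStronglyMeasurable g μ) (hfg : ∫⁻ x, ENNReal.ofReal |f x - g x| ∂μ ≠ ∞) :
    |∫ x, f x ∂μ - ∫ x, g x ∂μ| ≤ (∫⁻ x, ENNReal.ofReal |f x - g x| ∂μ).toReal := by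
  have hsub : Integrable (f - g) μ :=
    ⟨hf.sub hg, by simpa [HasFiniteIntegral, Real.enorm_eq_ofReal_abs] using hfg.lt_top⟩
  by_cases hfi : Integrable f μ
  · have hgi : Integrable g μ := by simpa using hfi.sub hsub
    rw [← integral_sub hfi hgi]
    exact norm_integral_le_lintegral_norm (fun x => f x - g x)
  · -- then `g` is not integrable either, and both integrals take the junk value `0`
    have hgi : ¬ Integrable g μ := fun hgi => hfi (by simpa using hgi.add hsub)
    rw [integral_undef hfi, integral_undef hgi, sub_zero, abs_zero]
    exact ENNReal.toReal_nonneg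

variable {γ κ C₀ ε : ℝ} {a b : X → ℝ}

theorem setLIntegral_abs_negPart_rpow_sub_le_of_le_neg (hγ : γ ∈ Ioc 0 1) (hκ : 0 < κ)
    (hεκ : ε ≤ κ / 2) (hab : ∀ x, |a x - b x| ≤ ε) :
    ∫⁻ x in {x | a x ≤ -κ}, ENNReal.ofReal |max 0 (-(a x)) ^ γ - max 0 (-(b x)) ^ γ| ∂μ ≤
      ENNReal.ofReal (γ * (κ / 2) ^ (γ - 1)) * μ {x | a x ≤ -κ} * ENNReal.ofReal ε := by
  rw [mul_right_comm, ← setLIntegral_const]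
  refine setLIntegral_mono measurable_const fun x (hx : a x ≤ -κ) => ?_
  have hmin : κ / 2 ≤ min (max 0 (-(a x))) (max 0 (-(b x))) := by
    have hb := (abs_le.1 (hab x)).1
    exact le_min (le_max_of_le_right (by linarith)) (le_max_of_le_right (by linarith))
  rw [ofReal_abs_rpow_sub_rpow hγ.1 (le_max_left _ _) (le_max_left _ _)]
  refine (setLIntegral_Ioc_mul_rpow_sub_one_le hγ.1.le hγ.2 (half_pos hκ) hmin).trans ?_
  gcongr
  rw [max_sub_min_eq_abs']
  exact (abs_max_zero_neg_sub_le (a x) (b x)).trans (hab x)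

theorem setLIntegral_abs_negPart_rpow_sub_le_of_mem_Ioc (hγ : 0 < γ) (hκ : 0 < κ)
    (ha : Measurable a) (hb : Measurable b)
    (hlevel : ∀ s ∈ Icc (-2 * κ) (0 : ℝ), ∀ δ ∈ Ioc (0 : ℝ) κ,
      μ {x | |a x - s| ≤ δ} ≤ ENNReal.ofReal (C₀ * δ))
    (hε : 0 < ε) (hεκ : ε ≤ κ / 2) (hab : ∀ x, |a x - b x| ≤ ε) :
    ∫⁻ x in {x | a x ∈ Ioc (-κ) ε}, ENNReal.ofReal |max 0 (-(a x)) ^ γ - max 0 (-(b x)) ^ γ| ∂μ ≤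
      ENNReal.ofReal (C₀ * ε) * ENNReal.ofReal ((2 * κ) ^ γ) := by
  set N := {x | a x ∈ Ioc (-κ) ε}
  have hN : MeasurableSet N := ha measurableSet_Ioc
  have hμN : μ N ≠ ∞ := by
    refine ne_top_of_le_ne_top ENNReal.ofReal_ne_top ((measure_mono fun x hx => ?_).trans
      (hlevel (-κ / 2) ⟨by linarith, by linarith⟩ κ ⟨hκ, le_rfl⟩))
    obtain ⟨hx₁, hx₂⟩ : a x ∈ Ioc (-κ) ε := hx
    show |a x - -κ / 2| ≤ κ
    exact abs_le.2 ⟨by linarith, by linarith⟩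
  have := isFiniteMeasure_restrict.2 hμN
  set p : X → ℝ := fun x => max 0 (-(a x))
  set q : X → ℝ := fun x => max 0 (-(b x))
  have hp : Measurable p := measurable_const.max ha.neg
  have hq : Measurable q := measurable_const.max hb.neg
  have hlayer : ∀ u, (μ.restrict N) {x | u ∈ Ioc (min (p x) (q x)) (max (p x) (q x))} ≤
      (Ioc 0 (2 * κ)).indicator (fun _ => ENNReal.ofReal (C₀ * ε)) u := by
    intro u
    have hlevel_of_mem : ∀ x ∈ {x | u ∈ Ioc (min (p x) (q x)) (max (p x) (q x))} ∩ N,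
        u ∈ Ioc 0 (2 * κ) ∧ |a x - -u| ≤ ε := by
      rintro x ⟨hu, hx₁, hx₂⟩
      have hau := abs_add_le_of_mem_Ioc_min_max (hab x) hu
      have hu₀ : 0 < u := (le_min (le_max_left _ _) (le_max_left _ _)).trans_lt hu.1
      exact ⟨⟨hu₀, by linarith [(abs_le.1 hau).2]⟩, by rwa [sub_neg_eq_add]⟩
    rw [Measure.restrict_apply' hN]
    by_cases hu : u ∈ Ioc 0 (2 * κ)
    · rw [indicator_of_mem hu]
      exact (measure_mono fun x hx => (hlevel_of_mem x hx).2).trans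
        (hlevel (-u) ⟨by linarith [hu.2], by linarith [hu.1]⟩ ε ⟨hε, by linarith⟩)
    · rw [eq_empty_of_forall_notMem fun x hx => hu (hlevel_of_mem x hx).1, measure_empty]
      exact zero_le
  calc ∫⁻ x in N, ENNReal.ofReal |p x ^ γ - q x ^ γ| ∂μ
      = ∫⁻ x in N, (∫⁻ u in Ioc (min (p x) (q x)) (max (p x) (q x)),
          ENNReal.ofReal (γ * u ^ (γ - 1))) ∂μ :=
        lintegral_congr fun x => ofReal_abs_rpow_sub_rpow hγ (le_max_left _ _) (le_max_left _ _)
    _ ≤ ENNReal.ofReal (C₀ * ε) * ∫⁻ u in Ioc 0 (2 * κ), ENNReal.ofReal (γ * u ^ (γ - 1)) :=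
        lintegral_setLIntegral_Ioc_le (hp.min hq) (hp.max hq) (by fun_prop) measurableSet_Ioc
          hlayer
    _ = ENNReal.ofReal (C₀ * ε) * ENNReal.ofReal ((2 * κ) ^ γ) := by
        rw [setLIntegral_Ioc_mul_rpow_sub_one hγ le_rfl (by positivity), Real.zero_rpow hγ.ne',
          sub_zero]

theorem lintegral_abs_negPart_rpow_sub_le (hγ : γ ∈ Ioc 0 1) (hκ : 0 < κ)
    (ha : Measurable a) (hb : Measurable b)
    (hlevel : ∀ s ∈ Icc (-2 * κ) (0 : ℝ), ∀ δ ∈ Ioc (0 : ℝ) κ,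
      μ {x | |a x - s| ≤ δ} ≤ ENNReal.ofReal (C₀ * δ))
    (hε : 0 < ε) (hεκ : ε ≤ κ / 2) (hab : ∀ x, |a x - b x| ≤ ε) :
    ∫⁻ x, ENNReal.ofReal |max 0 (-(a x)) ^ γ - max 0 (-(b x)) ^ γ| ∂μ ≤
      (ENNReal.ofReal (γ * (κ / 2) ^ (γ - 1)) * μ {x | a x ≤ -κ} +
        ENNReal.ofReal C₀ * ENNReal.ofReal ((2 * κ) ^ γ)) * ENNReal.ofReal ε := by
  have hsupp : Function.support (fun x => ENNReal.ofReal |max 0 (-(a x)) ^ γ - max 0 (-(b x)) ^ γ|)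
      ⊆ {x | a x ≤ -κ} ∪ {x | a x ∈ Ioc (-κ) ε} := by
    intro x hx
    by_contra hout
    have hax : ε < a x := by
      simp only [mem_union, mem_ofPred_eq, mem_Ioc, not_or, not_and, not_le] at hout
      exact hout.2 hout.1
    have hbx : 0 < b x := by linarith [(abs_le.1 (hab x)).2]
    apply hx
    dsimp only
    rw [max_eq_left (by linarith), max_eq_left (by linarith), sub_self, abs_zero,
      ENNReal.ofReal_zero]
  calc _ = ∫⁻ x in {x | a x ≤ -κ} ∪ {x | a x ∈ Ioc (-κ) ε},
          ENNReal.ofReal |max 0 (-(a x)) ^ γ - max 0 (-(b x)) ^ γ| ∂μ :=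
        (setLIntegral_eq_of_support_subset hsupp).symm
    _ ≤ _ := lintegral_union_le _ _ _
    _ ≤ ENNReal.ofReal (γ * (κ / 2) ^ (γ - 1)) * μ {x | a x ≤ -κ} * ENNReal.ofReal ε +
          ENNReal.ofReal (C₀ * ε) * ENNReal.ofReal ((2 * κ) ^ γ) :=
        add_le_add (setLIntegral_abs_negPart_rpow_sub_le_of_le_neg hγ hκ hεκ hab)
          (setLIntegral_abs_negPart_rpow_sub_le_of_mem_Ioc hγ.1 hκ ha hb hlevel hε hεκ hab)
    _ = _ := by rw [ENNReal.ofReal_mul' hε.le]; ring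

end

theorem stmt_11_general {X : Type*} [MeasurableSpace X] (μ : Measure X)
    (γ κ C₀ : ℝ) (hγ : γ ∈ Set.Ioc (0 : ℝ) 1) (hκ : 0 < κ)
    (a : X → ℝ) (ha : Measurable a)
    (hlevel : ∀ s ∈ Set.Icc (-2 * κ) (0 : ℝ), ∀ δ ∈ Set.Ioc (0 : ℝ) κ,
      μ {x | |a x - s| ≤ δ} ≤ ENNReal.ofReal (C₀ * δ))
    (hfin1 : μ {x | a x ≤ 0} < ⊤) :
    ∃ C : ℝ, ∀ ε : ℝ, 0 < ε → ε < κ / 2 →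
      ∀ b : X → ℝ, Measurable b →
        (∀ x, |a x - b x| ≤ ε) →
        IntegrableOn (fun x => (max 0 (-(b x))) ^ γ) {x | a x ≤ -κ} μ →
        |(∫ x, (max 0 (-(a x))) ^ γ ∂μ) - ∫ x, (max 0 (-(b x))) ^ γ ∂μ| ≤ C * ε := by
  set K := ENNReal.ofReal (γ * (κ / 2) ^ (γ - 1)) * μ {x | a x ≤ -κ} +
    ENNReal.ofReal C₀ * ENNReal.ofReal ((2 * κ) ^ γ)
  have hμ : μ {x | a x ≤ -κ} ≠ ∞ :=
    ne_top_of_le_ne_top hfin1.ne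
      (measure_mono (ofPred_subset_ofPred.2 fun x hx => hx.trans (neg_nonpos.2 hκ.le)))
  have hK : K ≠ ∞ := by finiteness
  refine ⟨K.toReal, fun ε hε hεκ b hb hab _ => ?_⟩
  have hL1 := lintegral_abs_negPart_rpow_sub_le (μ := μ) hγ hκ ha hb hlevel hε hεκ.le hab
  calc _ ≤ _ := abs_integral_sub_integral_le_lintegral
        ((measurable_const.max ha.neg).pow_const γ).aestronglyMeasurable
        ((measurable_const.max hb.neg).pow_const γ).aestronglyMeasurable
        (ne_top_of_le_ne_top (by finiteness) hL1)
    _ ≤ (K * ENNReal.ofReal ε).toReal := ENNReal.toReal_mono (by finiteness) hL1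
    _ = K.toReal * ε := by rw [ENNReal.toReal_mul, ENNReal.toReal_ofReal hε.le]

/-- Abstract comparison of phase-space integrals: let `γ ∈ (0,1]`, `κ > 0`, and let
`a` be measurable with the quantitative non-critical bound
`μ{|a − s| ≤ δ} ≤ C₀ δ` for `s ∈ [−2κ, 0]`, `δ ∈ (0,κ]`, with `μ{a ≤ 0} < ∞`,
`μ{−2κ ≤ a ≤ −κ} < ∞` and `(a)₋^γ` integrable on `{a ≤ −κ}`.  Then there is a constant
`C` such that for every `ε ∈ (0, κ/2)` and every measurable `b` with `|a − b| ≤ ε`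
pointwise and `(b)₋^γ` integrable on `{a ≤ −κ}`,
`|∫ (a)₋^γ dμ − ∫ (b)₋^γ dμ| ≤ C ε`. -/
theorem stmt_11 {X : Type*} [MeasurableSpace X] (μ : Measure X)
    (γ κ C₀ : ℝ) (hγ : γ ∈ Set.Ioc (0 : ℝ) 1) (hκ : 0 < κ)
    (a : X → ℝ) (ha : Measurable a)
    (hlevel : ∀ s ∈ Set.Icc (-2 * κ) (0 : ℝ), ∀ δ ∈ Set.Ioc (0 : ℝ) κ,
      μ {x | |a x - s| ≤ δ} ≤ ENNReal.ofReal (C₀ * δ))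
    (hfin1 : μ {x | a x ≤ 0} < ⊤)
    (hfin2 : μ {x | a x ∈ Set.Icc (-2 * κ) (-κ)} < ⊤)
    (hint_a : IntegrableOn (fun x => (max 0 (-(a x))) ^ γ) {x | a x ≤ -κ} μ) :
    ∃ C : ℝ, ∀ ε : ℝ, 0 < ε → ε < κ / 2 →
      ∀ b : X → ℝ, Measurable b →
        (∀ x, |a x - b x| ≤ ε) →
        IntegrableOn (fun x => (max 0 (-(b x))) ^ γ) {x | a x ≤ -κ} μ →
        |(∫ x, (max 0 (-(a x))) ^ γ ∂μ) - ∫ x, (max 0 (-(b x))) ^ γ ∂μ| ≤ C * ε :=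
  stmt_11_general μ γ κ C₀ hγ hκ a ha hlevel hfin1
end

section
/- Let f : ℝ → ℝ be C^{n+1} and define the almost analytic extension (without cutoff) f̃(x + iy) = Σ_{r=0}^{n} f^{(r)}(x) (iy)^r / r! for x, y ∈ ℝ. Then the Cauchy–Riemann derivative satisfies ∂̄ f̃(x+iy) := (1/2)(∂_x f̃ + i ∂_y f̃)(x+iy) = (1/2) f^{(n+1)}(x) (iy)^n / n!. In particular, if |f^{(n+1)}| ≤ M on ℝ, then |∂̄ f̃(x+iy)| ≤ (M/(2 n!)) |y|^n for all x, y. -/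
/-!
Differentiating `f̃` in `x` raises the order of every derivative of `f` by one, while
differentiating in `y` lowers the power of `iy` by one and produces a factor `i`. Since `i · i = -1`,
in `∂ₓ f̃ + i ∂_y f̃` the `y`-derivative of the term of order `r + 1` cancels the `x`-derivative of
the term of order `r`, leaving only the `x`-derivative of the top term `f^{(n+1)}(x) (iy)^n / n!`.
-/

/-- The `n`-term almost analytic extension `f̃(x+iy) = Σ_{r≤n} f^{(r)}(x) (iy)^r / r!`
of a `C^{n+1}` function `f : ℝ → ℝ`. -/
noncomputable def almostAnalyticExt (n : ℕ) (f : ℝ → ℝ) (x y : ℝ) : ℂ :=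
  ∑ r ∈ Finset.range (n + 1),
    ((iteratedDeriv r f x : ℝ) : ℂ) * (Complex.I * (y : ℂ)) ^ r / (Nat.factorial r : ℂ)

open Complex Finset Nat

theorem hasDerivAt_pow_succ_div_factorial (r : ℕ) (z : ℂ) :
    HasDerivAt (fun w : ℂ => w ^ (r + 1) / ((r + 1)! : ℂ)) (z ^ r / (r ! : ℂ)) z := by
  refine ((hasDerivAt_pow (r + 1) z).div_const ((r + 1)! : ℂ)).congr_deriv ?_
  rw [factorial_succ]
  push_cast
  field_simp

theorem hasDerivAt_sum_mul_pow_div_factorial (c : ℕ → ℂ) (n : ℕ) (z : ℂ) :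
    HasDerivAt (fun w : ℂ => ∑ r ∈ range (n + 1), c r * w ^ r / (r ! : ℂ))
      (∑ r ∈ range n, c (r + 1) * z ^ r / (r ! : ℂ)) z := by
  simp_rw [sum_range_succ' _ n, mul_div_assoc]
  simpa using (HasDerivAt.fun_sum fun r _ =>
    (hasDerivAt_pow_succ_div_factorial r z).const_mul (c (r + 1))).add_const (c 0)

theorem hasDerivAt_almostAnalyticExt_fst {n : ℕ} {f : ℝ → ℝ} (hf : ContDiff ℝ (n + 1 : ℕ) f)
    (x y : ℝ) :
    HasDerivAt (fun x' => almostAnalyticExt n f x' y)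
      (∑ r ∈ range (n + 1),
        ((iteratedDeriv (r + 1) f x : ℝ) : ℂ) * (I * y) ^ r / (r ! : ℂ)) x := by
  refine HasDerivAt.fun_sum fun r hr => ((HasDerivAt.ofReal_comp ?_).mul_const _).div_const _
  rw [iteratedDeriv_succ]
  exact (hf.differentiable_iteratedDeriv r (by exact_mod_cast mem_range.mp hr) x).hasDerivAt

theorem hasDerivAt_almostAnalyticExt_snd (n : ℕ) (f : ℝ → ℝ) (x y : ℝ) :
    HasDerivAt (fun y' => almostAnalyticExt n f x y')
      (I * ∑ r ∈ range n,
        ((iteratedDeriv (r + 1) f x : ℝ) : ℂ) * (I * y) ^ r / (r ! : ℂ)) y := by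
  have hI : HasDerivAt (fun y' : ℝ => I * y') I y := by
    simpa using (hasDerivAt_id (y : ℂ)).const_mul I |>.comp_ofReal
  have := (hasDerivAt_sum_mul_pow_div_factorial
    (fun r => ((iteratedDeriv r f x : ℝ) : ℂ)) n (I * y)).comp y hI
  rwa [mul_comm] at this

theorem almostAnalyticExt_cauchyRiemann {n : ℕ} {f : ℝ → ℝ} (hf : ContDiff ℝ (n + 1 : ℕ) f)
    (x y : ℝ) :
    deriv (fun x' => almostAnalyticExt n f x' y) x
        + I * deriv (fun y' => almostAnalyticExt n f x y') y
      = ((iteratedDeriv (n + 1) f x : ℝ) : ℂ) * (I * y) ^ n / (n ! : ℂ) := by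
  rw [(hasDerivAt_almostAnalyticExt_fst hf x y).deriv,
    (hasDerivAt_almostAnalyticExt_snd n f x y).deriv, ← mul_assoc, I_mul_I, sum_range_succ]
  ring

/-- The Cauchy–Riemann defect of the almost analytic extension:
`∂̄ f̃(x+iy) = (1/2) f^{(n+1)}(x) (iy)^n / n!`; in particular, if
`|f^{(n+1)}| ≤ M` on `ℝ`, then `|∂̄ f̃(x+iy)| ≤ (M/(2 n!)) |y|^n`. -/
theorem stmt_13 (n : ℕ) (f : ℝ → ℝ) (hf : ContDiff ℝ (n + 1 : ℕ) f) (x y : ℝ) :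
    (1 / 2 : ℂ) * (deriv (fun x' : ℝ => almostAnalyticExt n f x' y) x
        + Complex.I * deriv (fun y' : ℝ => almostAnalyticExt n f x y') y)
      = (1 / 2 : ℂ) * ((iteratedDeriv (n + 1) f x : ℝ) : ℂ) * (Complex.I * (y : ℂ)) ^ n /
          (Nat.factorial n : ℂ) ∧
    ∀ M : ℝ, (∀ t : ℝ, |iteratedDeriv (n + 1) f t| ≤ M) →
      ‖(1 / 2 : ℂ) * (deriv (fun x' : ℝ => almostAnalyticExt n f x' y) x
          + Complex.I * deriv (fun y' : ℝ => almostAnalyticExt n f x y') y)‖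
        ≤ M / (2 * Nat.factorial n) * |y| ^ n := by
  rw [almostAnalyticExt_cauchyRiemann hf x y]
  refine ⟨by ring, fun M hM => ?_⟩
  have hnorm : ‖(1 / 2 : ℂ) * (((iteratedDeriv (n + 1) f x : ℝ) : ℂ) * (I * y) ^ n / (n ! : ℂ))‖
      = |iteratedDeriv (n + 1) f x| / (2 * n !) * |y| ^ n := by
    simp only [norm_mul, norm_div, norm_pow, norm_I, norm_real, Real.norm_eq_abs, norm_natCast,
      one_div, norm_inv, Complex.norm_ofNat]
    ring
  rw [hnorm]
  gcongr
  exact hM x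
end

section
/- Let d ≥ 1, h ∈ (0,1], C > 0, and let (e_j)_{j ∈ J} be a countable family of real numbers (with multiplicity) such that for every m ∈ ℤ, the number of indices j with e_j ∈ (m h, (m+1) h] is at most C h^{1−d} (1 + m²). Let g : ℝ → ℝ satisfy |g(t)| ≤ C' (1 + t²)^{-2} for all t. Then for every ω ∈ ℝ, Σ_{j ∈ J} |g((e_j − ω)/h)| ≤ C'' h^{1−d}, where C'' depends only on C and C'. -/
lemma aux_summable_int : Summable (fun m : ℤ => 1 / (1 + (m : ℝ) ^ 2)) := by
  have hnat : Summable (fun n : ℕ => 1 / (1 + (n : ℝ) ^ 2)) := by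
    have h2 : Summable (fun n : ℕ => 2 * (1 / ((n : ℝ) + 1) ^ 2)) := by
      have := (summable_nat_add_iff (f := fun n : ℕ => 1 / (n : ℝ) ^ 2) 1).mpr
        (Real.summable_one_div_nat_pow.mpr one_lt_two)
      exact (this.congr (by intro n; push_cast; ring)).mul_left 2
    apply Summable.of_nonneg_of_le (fun n => by positivity) _ h2
    intro n
    rw [mul_one_div, div_le_div_iff₀ (by positivity) (by positivity)]
    nlinarith [sq_nonneg ((n : ℝ) - 1)]
  refine Summable.of_nat_of_neg (f := fun m : ℤ => 1 / (1 + (m : ℝ) ^ 2)) ?_ ?_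
  · exact hnat.congr (fun n => by push_cast; ring)
  · exact hnat.congr (fun n => by push_cast; ring)


/-- Abstract summation estimate for the Tauberian argument: if for every `ω` and every
`m ∈ ℤ` the number of indices `j` with `e_j − ω ∈ (mh, (m+1)h]` is at most
`C h^{1−d} (1+m²)`, and `|g(t)| ≤ C' (1+t²)^{−2}`, then
`Σ_j |g((e_j − ω)/h)| ≤ C'' h^{1−d}` with `C''` depending only on `C` and `C'`. -/
theorem stmt_14 (C C' : ℝ) (hC : 0 ≤ C) (hC' : 0 ≤ C') :
    ∃ C'' : ℝ, ∀ (d : ℕ), 1 ≤ d → ∀ h : ℝ, h ∈ Set.Ioc (0 : ℝ) 1 →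
      ∀ (J : Type) (_ : Countable J) (e : J → ℝ) (g : ℝ → ℝ),
        (∀ (ω : ℝ) (m : ℤ),
          {j : J | e j - ω ∈ Set.Ioc ((m : ℝ) * h) (((m : ℝ) + 1) * h)}.Finite ∧
          ({j : J | e j - ω ∈ Set.Ioc ((m : ℝ) * h) (((m : ℝ) + 1) * h)}.ncard : ℝ)
            ≤ C * h ^ ((1 : ℝ) - d) * (1 + (m : ℝ) ^ 2)) →
        (∀ t : ℝ, |g t| ≤ C' / (1 + t ^ 2) ^ 2) →
        ∀ ω : ℝ,
          Summable (fun j : J => |g ((e j - ω) / h)|) ∧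
          (∑' j : J, |g ((e j - ω) / h)|) ≤ C'' * h ^ ((1 : ℝ) - d) := by
  set S : ℝ := ∑' m : ℤ, 1 / (1 + (m : ℝ) ^ 2) with hS
  have hSnn : 0 ≤ S := tsum_nonneg (fun m => by positivity)
  refine ⟨9 * C * C' * S, ?_⟩
  intro d hd h hh J hJ e g hcount hg ω
  obtain ⟨hh0, hh1⟩ := hh
  set κ : J → ℤ := fun j => ⌈(e j - ω) / h⌉ - 1 with hκ
  set f : J → ℝ := fun j => |g ((e j - ω) / h)| with hf
  have hfnn : ∀ j, 0 ≤ f j := fun j => abs_nonneg _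
  have hpow : (0 : ℝ) < h ^ ((1 : ℝ) - d) := Real.rpow_pos_of_pos hh0 _
  -- membership of j in the interval indexed by κ j
  have hmem : ∀ j : J, e j - ω ∈ Set.Ioc ((κ j : ℝ) * h) (((κ j : ℝ) + 1) * h) := by
    intro j
    have hcl : ((κ j : ℝ)) < (e j - ω) / h ∧ (e j - ω) / h ≤ (κ j : ℝ) + 1 := by
      constructor
      · push_cast [hκ]
        have := Int.ceil_lt_add_one ((e j - ω) / h)
        linarith [Int.le_ceil ((e j - ω) / h)]
      · push_cast [hκ]
        linarith [Int.le_ceil ((e j - ω) / h)]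
      
    constructor
    · calc (κ j : ℝ) * h < ((e j - ω) / h) * h := by
            exact mul_lt_mul_of_pos_right hcl.1 hh0
        _ = e j - ω := by field_simp
    · calc e j - ω = ((e j - ω) / h) * h := by field_simp
        _ ≤ ((κ j : ℝ) + 1) * h := mul_le_mul_of_nonneg_right hcl.2 hh0.le
  -- pointwise bound on f in terms of κ j
  have hfb : ∀ j : J, f j ≤ 9 * C' / (1 + (κ j : ℝ) ^ 2) ^ 2 := by
    intro j
    set t : ℝ := (e j - ω) / h with ht
    have hml : (κ j : ℝ) < t := by
      have := (hmem j).1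
      rw [lt_div_iff₀ hh0]; exact this
    have hmu : t ≤ (κ j : ℝ) + 1 := by
      rw [div_le_iff₀ hh0]; exact (hmem j).2
    have key : 1 + (κ j : ℝ) ^ 2 ≤ 3 * (1 + t ^ 2) := by
      nlinarith [sq_nonneg (t + 1), sq_nonneg (t - 1), sq_nonneg ((κ j : ℝ) - t)]
    have h1 : (0 : ℝ) < (1 + t ^ 2) ^ 2 := by positivity
    have h2 : (0 : ℝ) < (1 + (κ j : ℝ) ^ 2) ^ 2 := by positivity
    calc f j ≤ C' / (1 + t ^ 2) ^ 2 := hg t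
      _ ≤ 9 * C' / (1 + (κ j : ℝ) ^ 2) ^ 2 := by
          rw [div_le_div_iff₀ h1 h2]
          have key2 : (1 + (κ j : ℝ) ^ 2) ^ 2 ≤ 9 * (1 + t ^ 2) ^ 2 := by
            have := pow_le_pow_left₀ (by positivity) key 2
            nlinarith [this]
          nlinarith [mul_le_mul_of_nonneg_left key2 hC']
  -- bound on partial sums
  have hsum : ∀ u : Finset J, ∑ j ∈ u, f j ≤ 9 * C * C' * S * h ^ ((1 : ℝ) - d) := by
    intro u
    have hmap : ∀ j ∈ u, κ j ∈ u.image κ := fun j hj => Finset.mem_image_of_mem κ hj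
    rw [← Finset.sum_fiberwise_of_maps_to hmap f]
    have hfiber : ∀ m : ℤ, ∑ j ∈ u.filter (fun j => κ j = m), f j
        ≤ 9 * C * C' * h ^ ((1 : ℝ) - d) * (1 / (1 + (m : ℝ) ^ 2)) := by
      intro m
      obtain ⟨hfin, hcard⟩ := hcount ω m
      have hsub : ↑(u.filter (fun j => κ j = m)) ⊆
          {j : J | e j - ω ∈ Set.Ioc ((m : ℝ) * h) (((m : ℝ) + 1) * h)} := by
        intro j hj
        simp only [Finset.coe_filter, Set.mem_setOf_eq] at hj
        rw [← hj.2]; exact hmem j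
      have hcard' : ((u.filter (fun j => κ j = m)).card : ℝ)
          ≤ C * h ^ ((1 : ℝ) - d) * (1 + (m : ℝ) ^ 2) := by
        refine le_trans ?_ hcard
        have := Set.ncard_le_ncard hsub hfin
        rw [Set.ncard_coe_finset] at this
        exact_mod_cast this
      calc ∑ j ∈ u.filter (fun j => κ j = m), f j
          ≤ ∑ _j ∈ u.filter (fun j => κ j = m), 9 * C' / (1 + (m : ℝ) ^ 2) ^ 2 := by
            apply Finset.sum_le_sum
            intro j hj
            have hjm : κ j = m := (Finset.mem_filter.mp hj).2
            have := hfb j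
            rwa [hjm] at this
        _ = ((u.filter (fun j => κ j = m)).card : ℝ) * (9 * C' / (1 + (m : ℝ) ^ 2) ^ 2) := by
            rw [Finset.sum_const, nsmul_eq_mul]
        _ ≤ (C * h ^ ((1 : ℝ) - d) * (1 + (m : ℝ) ^ 2)) * (9 * C' / (1 + (m : ℝ) ^ 2) ^ 2) := by
            apply mul_le_mul_of_nonneg_right hcard'
            positivity
        _ = 9 * C * C' * h ^ ((1 : ℝ) - d) * (1 / (1 + (m : ℝ) ^ 2)) := by
            have hpos : (0 : ℝ) < 1 + (m : ℝ) ^ 2 := by positivity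
            field_simp
    calc ∑ m ∈ u.image κ, ∑ j ∈ u.filter (fun j => κ j = m), f j
        ≤ ∑ m ∈ u.image κ, 9 * C * C' * h ^ ((1 : ℝ) - d) * (1 / (1 + (m : ℝ) ^ 2)) :=
          Finset.sum_le_sum (fun m _ => hfiber m)
      _ = 9 * C * C' * h ^ ((1 : ℝ) - d) * ∑ m ∈ u.image κ, 1 / (1 + (m : ℝ) ^ 2) := by
          rw [Finset.mul_sum]
      _ ≤ 9 * C * C' * h ^ ((1 : ℝ) - d) * S := by
          apply mul_le_mul_of_nonneg_left _ (by positivity)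
          exact Summable.sum_le_tsum _ (fun m _ => by positivity) aux_summable_int
      _ = 9 * C * C' * S * h ^ ((1 : ℝ) - d) := by ring
  have hsummable : Summable f := summable_of_sum_le hfnn hsum
  exact ⟨hsummable, Summable.tsum_le_of_sum_le hsummable hsum⟩
end
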